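/- arXiv:1411.7894 — 4 statements merged into one kernel-verified Lean document; each statement's English description precedes it below -/
import Mathlib

section
/- Let 0 < β ≤ γ be real numbers and let f : (0,∞) × ℝ → ℝ be continuously differentiable on the open sector {(r,φ) : 0 < r < 1, 0 < φ < γ}. Define F(ρ,θ) := f(ρ^{γ/β}, γθ/β). Then the Dirichlet energies agree: ∫₀^1 ∫₀^γ ( (∂₁f(r,φ))² + r^{−2}(∂₂f(r,φ))² ) r dφ dr = ∫₀^1 ∫₀^β ( (∂₁F(ρ,θ))² + ρ^{−2}(∂₂F(ρ,θ))² ) ρ dθ dρ (equality of extended-real-valued integrals of the nonnegative integrands). -/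
/-!
With `k = γ / β`, the map `(ρ, θ) ↦ (ρ ^ k, k θ)` sends the sector of angle `β` onto the sector
of angle `γ` and is conformal: by the chain rule the pull-back multiplies both `∂_r f` and
`r⁻¹ ∂_φ f` by `k ρ ^ (k - 1)`, so the energy density `|∇f|² r` pulls back to `k ρ ^ (k - 1) · k`
times the density at the image point, and `k ρ ^ (k - 1) · k` is the Jacobian of the map.
Two one-dimensional changes of variables, `φ = k θ` inside and `r = ρ ^ k` outside, conclude;
staying with iterated integrals avoids proving measurability of the partial derivatives.
-/

open Real MeasureTheory Set Function

section PartialDerivatives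

variable {𝕜 E₁ E₂ G : Type*} [NontriviallyNormedField 𝕜] [NormedAddCommGroup E₁]
  [NormedSpace 𝕜 E₁] [NormedAddCommGroup E₂] [NormedSpace 𝕜 E₂] [NormedAddCommGroup G]
  [NormedSpace 𝕜 G] {f : E₁ → E₂ → G} {x : E₁} {y : E₂}

theorem DifferentiableAt.uncurry_left (h : DifferentiableAt 𝕜 (uncurry f) (x, y)) :
    DifferentiableAt 𝕜 (f x) y :=
  h.comp y ((differentiableAt_const x).prodMk differentiableAt_id)

theorem DifferentiableAt.uncurry_right (h : DifferentiableAt 𝕜 (uncurry f) (x, y)) :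
    DifferentiableAt 𝕜 (fun a => f a y) x :=
  h.comp (f := fun a => (a, y)) x (differentiableAt_id.prodMk (differentiableAt_const y))

end PartialDerivatives

noncomputable def polarEnergyDensity (f : ℝ → ℝ → ℝ) (r φ : ℝ) : ℝ :=
  ((deriv (fun x => f x φ) r) ^ 2 + (r ^ 2)⁻¹ * (deriv (fun y => f r y) φ) ^ 2) * r

theorem polarEnergyDensity_comp_rpow_mul {f : ℝ → ℝ → ℝ} {k ρ θ : ℝ} (hρ : 0 < ρ)
    (hf : DifferentiableAt ℝ (uncurry f) (ρ ^ k, k * θ)) :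
    polarEnergyDensity (fun ρ θ => f (ρ ^ k) (k * θ)) ρ θ
      = k * ρ ^ (k - 1) * k * polarEnergyDensity f (ρ ^ k) (k * θ) := by
  have hρ_deriv : deriv (fun x => f (x ^ k) (k * θ)) ρ
      = deriv (fun x => f x (k * θ)) (ρ ^ k) * (k * ρ ^ (k - 1)) :=
    (hf.uncurry_right.hasDerivAt.comp ρ (hasDerivAt_rpow_const (Or.inl hρ.ne')) :).deriv
  have hθ_deriv : deriv (fun y => f (ρ ^ k) (k * y)) θ
      = deriv (fun y => f (ρ ^ k) y) (k * θ) * k :=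
    (hf.uncurry_left.hasDerivAt.comp θ ((hasDerivAt_id' θ).const_mul k) :).deriv.trans (by simp)
  have hpow : ρ ^ (k - 1) = ρ ^ k / ρ := by rw [rpow_sub hρ, rpow_one]
  have hpos : 0 < ρ ^ k := rpow_pos_of_pos hρ k
  simp only [polarEnergyDensity, hρ_deriv, hθ_deriv, hpow]
  field_simp

theorem lintegral_Ioo_comp_mul_left {a b k : ℝ} (hk : 0 < k) (g : ℝ → ENNReal) :
    ∫⁻ θ in Ioo a b, ENNReal.ofReal k * g (k * θ) = ∫⁻ φ in Ioo (k * a) (k * b), g φ := by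
  rw [← image_mul_left_Ioo hk,
    lintegral_image_eq_lintegral_abs_deriv_mul (f := (k * ·)) measurableSet_Ioo
      (fun θ _ => ((hasDerivAt_id' θ).const_mul k).hasDerivWithinAt.congr_deriv (mul_one k))
      (mul_right_injective₀ hk.ne').injOn,
    abs_of_pos hk]

theorem lintegral_Ioo_comp_rpow {a b k : ℝ} (ha : 0 ≤ a) (hab : a ≤ b) (hk : 0 < k)
    (g : ℝ → ENNReal) :
    ∫⁻ ρ in Ioo a b, ENNReal.ofReal (k * ρ ^ (k - 1)) * g (ρ ^ k)
      = ∫⁻ r in Ioo (a ^ k) (b ^ k), g r := by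
  have hmono : StrictMonoOn (fun ρ : ℝ => ρ ^ k) (Icc a b) :=
    (strictMonoOn_rpow_Ici_of_exponent_pos hk).mono fun ρ hρ => ha.trans hρ.1
  rw [← (continuous_rpow_const hk.le).continuousOn.image_Ioo_of_strictMonoOn hab hmono,
    lintegral_image_eq_lintegral_abs_deriv_mul measurableSet_Ioo
      (fun ρ hρ => (hasDerivAt_rpow_const (Or.inl (ha.trans_lt hρ.1).ne')).hasDerivWithinAt)
      (hmono.injOn.mono Ioo_subset_Icc_self)]
  refine setLIntegral_congr_fun measurableSet_Ioo fun ρ hρ => ?_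
  rw [abs_of_pos (mul_pos hk (rpow_pos_of_pos (ha.trans_lt hρ.1) _))]

theorem lintegral_sector_comp_rpow_mul {k β : ℝ} (hk : 0 < k) (g : ℝ → ℝ → ENNReal) :
    ∫⁻ ρ in Ioo (0 : ℝ) 1, ∫⁻ θ in Ioo (0 : ℝ) β,
        ENNReal.ofReal (k * ρ ^ (k - 1)) * (ENNReal.ofReal k * g (ρ ^ k) (k * θ))
      = ∫⁻ r in Ioo (0 : ℝ) 1, ∫⁻ φ in Ioo (0 : ℝ) (k * β), g r φ := by
  have hinner (ρ : ℝ) :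
      ∫⁻ θ in Ioo (0 : ℝ) β,
          ENNReal.ofReal (k * ρ ^ (k - 1)) * (ENNReal.ofReal k * g (ρ ^ k) (k * θ))
        = ENNReal.ofReal (k * ρ ^ (k - 1)) * ∫⁻ φ in Ioo (0 : ℝ) (k * β), g (ρ ^ k) φ := by
    rw [lintegral_const_mul' _ _ ENNReal.ofReal_ne_top, lintegral_Ioo_comp_mul_left hk (g (ρ ^ k)),
      mul_zero]
  rw [lintegral_congr hinner]
  simpa [zero_rpow hk.ne'] using
    lintegral_Ioo_comp_rpow le_rfl zero_le_one hk fun r => ∫⁻ φ in Ioo 0 (k * β), g r φ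

/-- The Dirichlet energy is invariant under the pull-back by
`Ψ_γ (ρ, θ) = (ρ^(γ/β), γθ/β)`, mapping the sector of angle `β` to the
sector of angle `γ` (`H¹`-isometry): for `f` continuously differentiable on the
open sector of angle `γ` and `F (ρ,θ) = f (ρ^(γ/β), γθ/β)`,
`∫₀¹∫₀^γ ((∂₁f)² + r⁻²(∂₂f)²) r dφ dr = ∫₀¹∫₀^β ((∂₁F)² + ρ⁻²(∂₂F)²) ρ dθ dρ`. -/
theorem sector_H1_isometry (β γ : ℝ) (hβ : 0 < β) (hβγ : β ≤ γ) (f : ℝ → ℝ → ℝ)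
    (hf : ContDiffOn ℝ 1 (fun p : ℝ × ℝ => f p.1 p.2)
      {p : ℝ × ℝ | 0 < p.1 ∧ p.1 < 1 ∧ 0 < p.2 ∧ p.2 < γ})
    (F : ℝ → ℝ → ℝ) (hF : F = fun ρ θ => f (ρ ^ (γ / β)) (γ * θ / β)) :
    ∫⁻ r in Ioo (0:ℝ) 1, ∫⁻ φ in Ioo (0:ℝ) γ,
        ENNReal.ofReal
          (((deriv (fun x => f x φ) r) ^ 2
              + (r ^ 2)⁻¹ * (deriv (fun y => f r y) φ) ^ 2) * r)
      = ∫⁻ ρ in Ioo (0:ℝ) 1, ∫⁻ θ in Ioo (0:ℝ) β,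
          ENNReal.ofReal
            (((deriv (fun x => F x θ) ρ) ^ 2
                + (ρ ^ 2)⁻¹ * (deriv (fun y => F ρ y) θ) ^ 2) * ρ) := by
  obtain ⟨k, hk, rfl⟩ : ∃ k > 0, γ = k * β :=
    ⟨γ / β, div_pos (hβ.trans_le hβγ) hβ, (div_mul_cancel₀ γ hβ.ne').symm⟩
  have hF' : F = fun ρ θ => f (ρ ^ k) (k * θ) := by
    rw [hF]
    field_simp
  have hopen : IsOpen {p : ℝ × ℝ | 0 < p.1 ∧ p.1 < 1 ∧ 0 < p.2 ∧ p.2 < k * β} :=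
    (isOpen_lt continuous_const continuous_fst).inter <|
      (isOpen_lt continuous_fst continuous_const).inter <|
        (isOpen_lt continuous_const continuous_snd).inter (isOpen_lt continuous_snd continuous_const)
  change ∫⁻ r in Ioo (0:ℝ) 1, ∫⁻ φ in Ioo (0:ℝ) (k * β),
      ENNReal.ofReal (polarEnergyDensity f r φ)
    = ∫⁻ ρ in Ioo (0:ℝ) 1, ∫⁻ θ in Ioo (0:ℝ) β, ENNReal.ofReal (polarEnergyDensity F ρ θ)
  rw [← lintegral_sector_comp_rpow_mul hk]
  refine setLIntegral_congr_fun measurableSet_Ioo fun ρ ⟨hρ₀, hρ₁⟩ =>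
    setLIntegral_congr_fun measurableSet_Ioo fun θ ⟨hθ₀, hθβ⟩ => ?_
  have hmem : (ρ ^ k, k * θ) ∈ {p : ℝ × ℝ | 0 < p.1 ∧ p.1 < 1 ∧ 0 < p.2 ∧ p.2 < k * β} :=
    ⟨rpow_pos_of_pos hρ₀ k, rpow_lt_one hρ₀.le hρ₁ hk, mul_pos hk hθ₀,
      mul_lt_mul_of_pos_left hθβ hk⟩
  rw [hF', polarEnergyDensity_comp_rpow_mul hρ₀
      ((hf.differentiableOn one_ne_zero).differentiableAt (hopen.mem_nhds hmem)),
    ENNReal.ofReal_mul (p := k * ρ ^ (k - 1) * k) (by positivity),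
    ENNReal.ofReal_mul (p := k * ρ ^ (k - 1)) (by positivity), mul_assoc]
end

section
/- Let 0 < β ≤ γ be real numbers and let f : (0,∞) × ℝ → ℝ be twice continuously differentiable on the open sector {(r,φ) : 0 < r < 1, 0 < φ < γ}. Write Δf(r,φ) := ∂₁²f(r,φ) + r^{−1}∂₁f(r,φ) + r^{−2}∂₂²f(r,φ) for the Euclidean Laplacian in polar coordinates, and set F(ρ,θ) := f(ρ^{γ/β}, γθ/β). Then ∫₀^1 ∫₀^β ( (β/γ)² ρ^{2−2γ/β} · ΔF(ρ,θ) )² · (γ/β)² ρ^{2γ/β−1} dθ dρ = ∫₀^1 ∫₀^γ ( Δf(r,φ) )² r dφ dr (equality of extended-real-valued integrals). -/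
/-!
With `c = γ / β`, the map `(ρ, θ) ↦ (ρ ^ c, c θ)` acts on each polar variable separately, so the
one-variable second-order chain rule gives `ΔF (ρ, θ) = c² ρ^(2c-2) Δf (ρ ^ c, c θ)`: the prefactor
`(β/γ)² ρ^(2-2γ/β)` exactly cancels the conformal factor. The remaining weight `c² ρ^(2c-1)` is the
Jacobian `c ρ^(c-1) · c` of the map times the polar weight `r = ρ ^ c`, so the two sides agree by a
one-dimensional change of variables in each integral.
-/

open Real MeasureTheory Set Filter Topology

theorem deriv_deriv_comp {g φ φ' : ℝ → ℝ} {φ'' x : ℝ} (hg : ContDiffAt ℝ 2 g (φ x))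
    (hφ : ∀ᶠ t in 𝓝 x, HasDerivAt φ (φ' t) t) (hφ' : HasDerivAt φ' φ'' x) :
    deriv (deriv fun t => g (φ t)) x
      = deriv (deriv g) (φ x) * φ' x ^ 2 + deriv g (φ x) * φ'' := by
  have hg_near : ∀ᶠ t in 𝓝 x, DifferentiableAt ℝ g (φ t) :=
    hφ.self_of_nhds.continuousAt.eventually ((hg.eventually (by simp)).mono fun y hy =>
      hy.differentiableAt (by norm_num))
  have hchain : deriv (fun t => g (φ t)) =ᶠ[𝓝 x] fun t => deriv g (φ t) * φ' t :=
    (hg_near.and hφ).mono fun t ht => (ht.1.hasDerivAt.comp t ht.2).deriv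
  have hg' : DifferentiableAt ℝ (deriv g) (φ x) :=
    (hg.derivWithin (m := 1) (by norm_num)).differentiableAt (by norm_num)
  have hprod : HasDerivAt (fun t => deriv g (φ t) * φ' t)
      (deriv (deriv g) (φ x) * φ' x * φ' x + deriv g (φ x) * φ'') x :=
    (hg'.hasDerivAt.comp x hφ.self_of_nhds).mul hφ'
  rw [hchain.deriv_eq, hprod.deriv]
  ring

noncomputable def polarLaplacian (u : ℝ → ℝ → ℝ) (r φ : ℝ) : ℝ :=
  deriv (deriv fun x => u x φ) r + r⁻¹ * deriv (fun x => u x φ) r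
    + (r ^ 2)⁻¹ * deriv (deriv fun y => u r y) φ

theorem polarLaplacian_comp_rpow_mul {f : ℝ → ℝ → ℝ} {c ρ θ : ℝ} (hρ : 0 < ρ)
    (hf : ContDiffAt ℝ 2 (fun p : ℝ × ℝ => f p.1 p.2) (ρ ^ c, c * θ)) :
    polarLaplacian (fun x y => f (x ^ c) (c * y)) ρ θ
      = c ^ 2 * ρ ^ (2 * c - 2) * polarLaplacian f (ρ ^ c) (c * θ) := by
  have hradial : ContDiffAt ℝ 2 (fun x => f x (c * θ)) (ρ ^ c) :=
    hf.comp (ρ ^ c) (contDiffAt_id.prodMk contDiffAt_const)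
  have hangular : ContDiffAt ℝ 2 (fun y => f (ρ ^ c) y) (c * θ) :=
    hf.comp (c * θ) (contDiffAt_const.prodMk contDiffAt_id)
  have hpow : ∀ᶠ x in 𝓝 ρ, HasDerivAt (· ^ c) (c * x ^ (c - 1)) x :=
    (lt_mem_nhds hρ).mono fun x hx => hasDerivAt_rpow_const (Or.inl hx.ne')
  have hpow' : HasDerivAt (fun x => c * x ^ (c - 1)) (c * ((c - 1) * ρ ^ (c - 1 - 1))) ρ :=
    (hasDerivAt_rpow_const (Or.inl hρ.ne')).const_mul c
  have hradial' : HasDerivAt (fun x => f (x ^ c) (c * θ))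
      (deriv (fun x => f x (c * θ)) (ρ ^ c) * (c * ρ ^ (c - 1))) ρ :=
    HasDerivAt.comp (h₂ := fun x => f x (c * θ)) ρ
      (hradial.differentiableAt (by norm_num)).hasDerivAt hpow.self_of_nhds
  simp only [polarLaplacian]
  rw [deriv_deriv_comp (φ := (· ^ c)) hradial hpow hpow', hradial'.deriv,
    deriv_deriv_comp (φ := (c * ·)) hangular (.of_forall fun _ => hasDerivAt_const_mul c)
      (hasDerivAt_const θ c)]
  have h1 : ρ ^ (c - 1) = ρ ^ c / ρ := rpow_sub_one hρ.ne' c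
  have h2 : ρ ^ (c - 1 - 1) = ρ ^ c / ρ ^ 2 := by
    rw [sub_sub, one_add_one_eq_two, rpow_sub hρ, rpow_two]
  have h3 : ρ ^ (2 * c - 2) = (ρ ^ c) ^ 2 / ρ ^ 2 := by
    rw [rpow_sub hρ, mul_comm, rpow_mul hρ.le, rpow_two, rpow_two]
  have hρc : 0 < ρ ^ c := rpow_pos_of_pos hρ c
  rw [h1, h2, h3]
  field_simp
  ring

theorem lintegral_Ioo_zero_one_comp_rpow {c : ℝ} (hc : 0 < c) (g : ℝ → ENNReal) :
    ∫⁻ r in Ioo 0 1, g r = ∫⁻ ρ in Ioo 0 1, ENNReal.ofReal (c * ρ ^ (c - 1)) * g (ρ ^ c) := by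
  have hmono : StrictMonoOn (· ^ c) (Icc (0 : ℝ) 1) :=
    (strictMonoOn_rpow_Ici_of_exponent_pos hc).mono Icc_subset_Ici_self
  have himage : (· ^ c) '' Ioo (0 : ℝ) 1 = Ioo 0 1 := by
    simpa [zero_rpow hc.ne'] using
      (continuous_rpow_const hc.le).continuousOn.image_Ioo_of_strictMonoOn zero_le_one hmono
  conv_lhs => rw [← himage]
  rw [lintegral_image_eq_lintegral_abs_deriv_mul measurableSet_Ioo
    (fun ρ hρ => (hasDerivAt_rpow_const (Or.inl hρ.1.ne')).hasDerivWithinAt)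
    (hmono.injOn.mono Ioo_subset_Icc_self)]
  refine setLIntegral_congr_fun measurableSet_Ioo fun ρ hρ => ?_
  rw [abs_of_pos (mul_pos hc (rpow_pos_of_pos hρ.1 _))]

theorem lintegral_Ioo_zero_comp_mul_left {c : ℝ} (hc : 0 < c) (b : ℝ) (g : ℝ → ENNReal) :
    ∫⁻ φ in Ioo 0 (c * b), g φ = ∫⁻ θ in Ioo 0 b, ENNReal.ofReal c * g (c * θ) := by
  have himage : (c * ·) '' Ioo 0 b = Ioo 0 (c * b) := by
    simpa using image_mul_left_Ioo hc 0 b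
  rw [← himage, lintegral_image_eq_lintegral_abs_deriv_mul (f' := fun _ => c) measurableSet_Ioo
    (fun _ _ => (hasDerivAt_const_mul c).hasDerivWithinAt)
    (mul_right_injective₀ hc.ne').injOn, abs_of_pos hc]

/-- The `H²`-isometry computation (Lemma 2 of the paper):
with `Δf = ∂₁²f + r⁻¹∂₁f + r⁻²∂₂²f` the Euclidean Laplacian in polar coordinates
and `F (ρ,θ) = f (ρ^(γ/β), γθ/β)`,
`∫₀¹∫₀^β ((β/γ)² ρ^(2-2γ/β) ΔF)² (γ/β)² ρ^(2γ/β-1) dθ dρ = ∫₀¹∫₀^γ (Δf)² r dφ dr`. -/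
theorem sector_H2_isometry (β γ : ℝ) (hβ : 0 < β) (hβγ : β ≤ γ) (f : ℝ → ℝ → ℝ)
    (hf : ContDiffOn ℝ 2 (fun p : ℝ × ℝ => f p.1 p.2)
      {p : ℝ × ℝ | 0 < p.1 ∧ p.1 < 1 ∧ 0 < p.2 ∧ p.2 < γ})
    (F : ℝ → ℝ → ℝ) (hF : F = fun ρ θ => f (ρ ^ (γ / β)) (γ * θ / β))
    (lap : (ℝ → ℝ → ℝ) → ℝ → ℝ → ℝ)
    (hlap : lap = fun u r φ =>
      deriv (fun x => deriv (fun x' => u x' φ) x) r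
        + r⁻¹ * deriv (fun x => u x φ) r
        + (r ^ 2)⁻¹ * deriv (fun y => deriv (fun y' => u r y') y) φ) :
    ∫⁻ ρ in Ioo (0:ℝ) 1, ∫⁻ θ in Ioo (0:ℝ) β,
        ENNReal.ofReal
          (((β / γ) ^ 2 * ρ ^ (2 - 2 * γ / β) * lap F ρ θ) ^ 2
            * ((γ / β) ^ 2 * ρ ^ (2 * γ / β - 1)))
      = ∫⁻ r in Ioo (0:ℝ) 1, ∫⁻ φ in Ioo (0:ℝ) γ,
          ENNReal.ofReal ((lap f r φ) ^ 2 * r) := by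
  obtain ⟨c, hc_def⟩ : ∃ c, c = γ / β := ⟨_, rfl⟩
  have hc : 0 < c := hc_def ▸ div_pos (hβ.trans_le hβγ) hβ
  have hγ : γ = c * β := by rw [hc_def, div_mul_cancel₀ _ hβ.ne']
  have hF' : F = fun x y => f (x ^ c) (c * y) := by simp only [hF, hc_def, mul_div_right_comm]
  have hlap' : lap = polarLaplacian := hlap
  have hsector : IsOpen {p : ℝ × ℝ | 0 < p.1 ∧ p.1 < 1 ∧ 0 < p.2 ∧ p.2 < γ} :=
    (isOpen_lt continuous_const continuous_fst).inter <|
      (isOpen_lt continuous_fst continuous_const).inter <|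
        (isOpen_lt continuous_const continuous_snd).inter <|
          isOpen_lt continuous_snd continuous_const
  rw [show 2 * γ / β = 2 * c by rw [hc_def, mul_div_assoc], ← hc_def,
    show β / γ = c⁻¹ by rw [hc_def, inv_div], hF', hlap']
  conv_rhs => rw [hγ, lintegral_Ioo_zero_one_comp_rpow hc]
  refine setLIntegral_congr_fun measurableSet_Ioo fun ρ hρ => ?_
  rw [lintegral_Ioo_zero_comp_mul_left hc, ← lintegral_const_mul' _ _ ENNReal.ofReal_ne_top]
  refine setLIntegral_congr_fun measurableSet_Ioo fun θ hθ => ?_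
  have hmem : (ρ ^ c, c * θ) ∈ {p : ℝ × ℝ | 0 < p.1 ∧ p.1 < 1 ∧ 0 < p.2 ∧ p.2 < γ} :=
    ⟨rpow_pos_of_pos hρ.1 c, rpow_lt_one hρ.1.le hρ.2 hc, mul_pos hc hθ.1,
      hγ ▸ mul_lt_mul_of_pos_left hθ.2 hc⟩
  rw [polarLaplacian_comp_rpow_mul hρ.1 (hf.contDiffAt (hsector.mem_nhds hmem)),
    ← ENNReal.ofReal_mul hc.le, ← ENNReal.ofReal_mul (mul_pos hc (rpow_pos_of_pos hρ.1 _)).le]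
  congr 1
  have hcancel : ρ ^ (2 - 2 * c) * ρ ^ (2 * c - 2) = 1 := by
    rw [← rpow_add hρ.1, sub_add_sub_cancel', sub_self, rpow_zero]
  have hweight : ρ ^ (2 * c - 1) = ρ ^ (c - 1) * ρ ^ c := by
    rw [← rpow_add hρ.1]; ring_nf
  calc _ = (c⁻¹ * c) ^ 4 * (ρ ^ (2 - 2 * c) * ρ ^ (2 * c - 2)) ^ 2
        * polarLaplacian f (ρ ^ c) (c * θ) ^ 2 * c ^ 2 * ρ ^ (2 * c - 1) := by ring
    _ = _ := by rw [inv_mul_cancel₀ hc.ne', hcancel, hweight]; ring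
end

section
/- Fix α ∈ (0,π) and for γ > 0 define σ_γ(ρ) := log(γ/α) + (γ/α − 1) log ρ for ρ > 0. Write Δu(ρ,θ) := −( ∂₁²u(ρ,θ) + ρ^{−1}∂₁u(ρ,θ) + ρ^{−2}∂₂²u(ρ,θ) ) for the (positive) Euclidean Laplacian in polar coordinates. Then for every function f : (0,∞) × ℝ → ℝ that is three times continuously differentiable and every point (ρ,θ) with ρ > 0, the function γ ↦ e^{−σ_γ(ρ)} · ( Δ( (ρ',θ') ↦ e^{−σ_γ(ρ')} f(ρ',θ') ) )(ρ,θ) is differentiable at γ = α, with derivative equal to −(2/α)(1 + log ρ) · Δf(ρ,θ) + (2/α) ρ^{−1} ∂₁f(ρ,θ). -/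
/-! With `b = γ/α − 1` and `c = log (γ/α)`, the weight `e^{−σ_γ} = e^{−c} ρ^{−b}` is radial, so the
Leibniz rule `Δ(wf) = wΔf + (Δw)f − 2 ∂ᵨw ∂ᵨf` together with `∂ᵨw = −(b/ρ) w` and
`Δw = −(b²/ρ²) w` gives `e^{−σ_γ} Δ(e^{−σ_γ} f) = e^{−2σ_γ} (Δf + 2bρ⁻¹ ∂ᵨf − b²ρ⁻² f)`.
This is explicit in `γ`; differentiating at `γ = α`, where `σ_α = b = 0` and `∂_γ σ = (1 + log ρ)/α`,
only the terms linear in `b` and `σ` survive. -/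

open Real Set

/-- The positive Euclidean Laplacian in polar coordinates:
`Δu(ρ,θ) = −(∂₁²u + ρ⁻¹ ∂₁u + ρ⁻² ∂₂²u)`. -/
noncomputable def lapPolar (u : ℝ → ℝ → ℝ) (ρ θ : ℝ) : ℝ :=
  -(deriv (fun x => deriv (fun x' => u x' θ) x) ρ
      + ρ⁻¹ * deriv (fun x => u x θ) ρ
      + (ρ ^ 2)⁻¹ * deriv (fun y => deriv (fun y' => u ρ y') y) θ)

theorem lapPolar_radial (g : ℝ → ℝ) (ρ θ : ℝ) :
    lapPolar (fun x _ => g x) ρ θ = -(deriv (deriv g) ρ + ρ⁻¹ * deriv g ρ) := by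
  simp [lapPolar]

theorem deriv_deriv_mul {g φ : ℝ → ℝ} {x : ℝ} (hg : ContDiffAt ℝ 2 g x)
    (hφ : ContDiffAt ℝ 2 φ x) :
    deriv (deriv fun y => g y * φ y) x
      = deriv (deriv g) x * φ x + 2 * deriv g x * deriv φ x + g x * deriv (deriv φ) x := by
  have h := iteratedDeriv_fun_mul hg hφ
  simp only [Finset.sum_range_succ, Finset.sum_range_zero, Nat.choose_zero_right,
    Nat.choose_one_right, Nat.choose_self, Nat.sub_self, iteratedDeriv_succ, iteratedDeriv_zero] at h
  linear_combination h

theorem lapPolar_radial_mul {g : ℝ → ℝ} {u : ℝ → ℝ → ℝ} {ρ θ : ℝ}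
    (hg : ContDiffAt ℝ 2 g ρ) (hu : ContDiffAt ℝ 2 (fun x => u x θ) ρ) :
    lapPolar (fun x y => g x * u x y) ρ θ
      = g ρ * lapPolar u ρ θ + lapPolar (fun x _ => g x) ρ θ * u ρ θ
        - 2 * deriv g ρ * deriv (fun x => u x θ) ρ := by
  have h1 := hg.differentiableAt (by norm_num)
  have h2 := hu.differentiableAt (by norm_num)
  rw [lapPolar_radial, lapPolar, lapPolar, deriv_deriv_mul hg hu, deriv_fun_mul h1 h2]
  simp only [deriv_const_mul_field]
  ring

theorem hasDerivAt_exp_neg_add_mul_log (b c : ℝ) {x : ℝ} (hx : x ≠ 0) :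
    HasDerivAt (fun t => exp (-(c + b * log t))) (-(b * x⁻¹) * exp (-(c + b * log x))) x := by
  simpa [mul_comm] using ((((hasDerivAt_log hx).const_mul b).const_add c).neg).exp

theorem lapPolar_exp_neg_add_mul_log (b c : ℝ) {ρ : ℝ} (θ : ℝ) (hρ : ρ ≠ 0) :
    lapPolar (fun x _ => exp (-(c + b * log x))) ρ θ
      = -(b ^ 2 * (ρ ^ 2)⁻¹) * exp (-(c + b * log ρ)) := by
  set w := fun x => exp (-(c + b * log x))
  have hw : HasDerivAt w (-(b * ρ⁻¹) * w ρ) ρ := hasDerivAt_exp_neg_add_mul_log b c hρ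
  have hderiv : deriv w =ᶠ[nhds ρ] fun x => -(b * x⁻¹) * w x := by
    filter_upwards [isOpen_ne.mem_nhds hρ] with x hx
    exact (hasDerivAt_exp_neg_add_mul_log b c hx).deriv
  have hcoef : HasDerivAt (fun x : ℝ => -(b * x⁻¹)) (b * (ρ ^ 2)⁻¹) ρ := by
    simpa using ((hasDerivAt_inv hρ).const_mul b).fun_neg
  have h2 : deriv (deriv w) ρ = b * (ρ ^ 2)⁻¹ * w ρ + -(b * ρ⁻¹) * (-(b * ρ⁻¹) * w ρ) := by
    rw [hderiv.deriv_eq]; exact (hcoef.mul hw).deriv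
  rw [lapPolar_radial, h2, hw.deriv]
  field_simp
  ring

theorem lapPolar_exp_neg_add_mul_log_mul (b c : ℝ) {u : ℝ → ℝ → ℝ} {ρ θ : ℝ} (hρ : ρ ≠ 0)
    (hu : ContDiffAt ℝ 2 (fun x => u x θ) ρ) :
    lapPolar (fun x y => exp (-(c + b * log x)) * u x y) ρ θ
      = exp (-(c + b * log ρ)) * (lapPolar u ρ θ + 2 * b * ρ⁻¹ * deriv (fun x => u x θ) ρ
          - b ^ 2 * (ρ ^ 2)⁻¹ * u ρ θ) := by
  have hlog := contDiffAt_log (n := 2).mpr hρ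
  have hw : ContDiffAt ℝ 2 (fun x => exp (-(c + b * log x))) ρ := by fun_prop
  rw [lapPolar_radial_mul hw hu, lapPolar_exp_neg_add_mul_log b c θ hρ,
    (hasDerivAt_exp_neg_add_mul_log b c hρ).deriv]
  ring

/-- With `σ_γ(ρ) = log(γ/α) + (γ/α − 1) log ρ`, for every `C³` function
`f` on `(0,∞) × ℝ` and every point `(ρ,θ)` with `ρ > 0`, the map
`γ ↦ e^{−σ_γ(ρ)} Δ(e^{−σ_γ} f)(ρ,θ)` is differentiable at `γ = α` with derivative
`−(2/α)(1 + log ρ) Δf(ρ,θ) + (2/α) ρ⁻¹ ∂₁f(ρ,θ)`. -/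
theorem deriv_conjugated_laplacian (α : ℝ) (hα : α ∈ Ioo 0 π) (f : ℝ → ℝ → ℝ)
    (hf : ContDiffOn ℝ 3 (fun p : ℝ × ℝ => f p.1 p.2) (Ioi (0:ℝ) ×ˢ (univ : Set ℝ)))
    (ρ θ : ℝ) (hρ : 0 < ρ) :
    HasDerivAt
      (fun γ : ℝ =>
        Real.exp (-(Real.log (γ / α) + (γ / α - 1) * Real.log ρ)) *
          lapPolar
            (fun ρ' θ' =>
              Real.exp (-(Real.log (γ / α) + (γ / α - 1) * Real.log ρ')) * f ρ' θ')
            ρ θ)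
      (-(2 / α) * (1 + Real.log ρ) * lapPolar f ρ θ
        + (2 / α) * ρ⁻¹ * deriv (fun x => f x θ) ρ)
      α := by
  have hα0 : α ≠ 0 := hα.1.ne'
  have hu : ContDiffAt ℝ 2 (fun x => f x θ) ρ := by
    have hfρθ : ContDiffAt ℝ 3 (fun p : ℝ × ℝ => f p.1 p.2) (ρ, θ) :=
      hf.contDiffAt (prod_mem_nhds (Ioi_mem_nhds hρ) Filter.univ_mem)
    exact (hfρθ.comp ρ (contDiffAt_id.prodMk contDiffAt_const)).of_le
      (by norm_num : (2 : WithTop ℕ∞) ≤ 3)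
  have hb : HasDerivAt (fun γ => γ / α - 1) (1 / α) α :=
    ((hasDerivAt_id α).div_const α).sub_const 1
  have hσ : HasDerivAt (fun γ => log (γ / α) + (γ / α - 1) * log ρ) ((1 + log ρ) / α) α := by
    have hlog := ((hasDerivAt_id α).div_const α).log (by simpa)
    exact (hlog.add (hb.mul_const (log ρ))).congr_deriv (by simp [hα0]; ring)
  have hE := hσ.neg.exp
  have hP := ((hasDerivAt_const α (lapPolar f ρ θ)).add
    (((hb.const_mul 2).mul_const ρ⁻¹).mul_const (deriv (fun x => f x θ) ρ))).sub
    (((hb.pow 2).mul_const (ρ ^ 2)⁻¹).mul_const (f ρ θ))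
  simp_rw [lapPolar_exp_neg_add_mul_log_mul _ _ hρ.ne' hu]
  refine (hE.mul (hE.mul hP)).congr_deriv ?_
  simp [hα0]
  ring
end

section
/- Let I₀(u) := (1/π) ∫₀^π e^{u cos φ} dφ and I₁(u) := (1/π) ∫₀^π e^{u cos φ} cos φ dφ, and define g(u) := e^{−u} u (I₀(u) + I₁(u)). Then for every X > 0, ∫₀^X (log u) e^{−u} I₀(u) du = (log X) · g(X) − 2 g(X) − e^{−X} I₀(X) + 1. -/
/-!
Differentiating under the integral sign gives `I₀' = I₁`, and integrating
`d/dφ (e^{u cos φ} sin φ)` over `[0, π]` gives the modified Bessel equation `(u I₁)' = u I₀`;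
together they yield `g' = e^{-u} I₀`. Since `g(u)/u = e^{-u} (I₀ + I₁)` and
`(e^{-u} I₀)' = e^{-u} (I₁ - I₀)`, the function `F = log · g - 2 g - e^{-u} I₀` has derivative
`log u · e^{-u} I₀(u)` away from `0`. As `u log u → 0`, `F` is continuous with `F(0) = -1`, and
the fundamental theorem of calculus applies on any interval with endpoint `0`.
-/

open Real

/-- The modified Bessel function of the first kind of order zero,
`I₀(u) = (1/π) ∫₀^π e^{u cos φ} dφ`. -/
noncomputable def besselI0 (u : ℝ) : ℝ := (1 / π) * ∫ φ in (0:ℝ)..π, Real.exp (u * Real.cos φ)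

/-- The modified Bessel function of the first kind of order one,
`I₁(u) = (1/π) ∫₀^π e^{u cos φ} cos φ dφ`. -/
noncomputable def besselI1 (u : ℝ) : ℝ :=
  (1 / π) * ∫ φ in (0:ℝ)..π, Real.exp (u * Real.cos φ) * Real.cos φ

/-- `g(u) = e^{−u} u (I₀(u) + I₁(u))`. -/
noncomputable def gBessel (u : ℝ) : ℝ := Real.exp (-u) * u * (besselI0 u + besselI1 u)

open MeasureTheory intervalIntegral Set

lemma hasDerivAt_integral_exp_mul_mul {a b : ℝ} {c h : ℝ → ℝ} (hc : Continuous c)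
    (hh : Continuous h) (u : ℝ) :
    HasDerivAt (fun v => ∫ t in a..b, exp (v * c t) * h t)
      (∫ t in a..b, exp (u * c t) * c t * h t) u := by
  have hbound : ∀ t, ∀ x ∈ Metric.ball u 1,
      ‖exp (x * c t) * c t * h t‖ ≤ exp ((|u| + 1) * |c t|) * |c t| * |h t| := by
    intro t x hx
    have hx : |x| ≤ |u| + 1 := by
      have := abs_sub_abs_le_abs_sub x u
      rw [Metric.mem_ball, Real.dist_eq] at hx
      linarith
    have hexp : x * c t ≤ (|u| + 1) * |c t| :=
      (le_abs_self _).trans (by rw [abs_mul]; gcongr)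
    rw [norm_mul, norm_mul, Real.norm_eq_abs, Real.norm_eq_abs, Real.norm_eq_abs, Real.abs_exp]
    gcongr
  refine (hasDerivAt_integral_of_dominated_loc_of_deriv_le (Metric.ball_mem_nhds u one_pos)
    (.of_forall fun x => (by fun_prop : Continuous _).aestronglyMeasurable)
    ((by fun_prop : Continuous _).intervalIntegrable _ _)
    (by fun_prop : Continuous _).aestronglyMeasurable
    (ae_of_all _ fun t _ => hbound t)
    ((by fun_prop : Continuous _).intervalIntegrable _ _)
    (ae_of_all _ fun t _ x _ => ?_)).2
  exact ((hasDerivAt_mul_const (c t)).exp.mul_const (h t)).congr_deriv (by ring)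

lemma hasDerivAt_besselI0 (u : ℝ) : HasDerivAt besselI0 (besselI1 u) u := by
  have := (hasDerivAt_integral_exp_mul_mul (a := 0) (b := π) continuous_cos continuous_const u
    (h := fun _ => 1)).const_mul (1 / π)
  simp only [mul_one] at this
  exact this

lemma hasDerivAt_besselI1 (u : ℝ) :
    HasDerivAt besselI1 ((1 / π) * ∫ φ in (0:ℝ)..π, exp (u * cos φ) * cos φ * cos φ) u :=
  (hasDerivAt_integral_exp_mul_mul continuous_cos continuous_cos u).const_mul (1 / π)

@[fun_prop]
lemma continuous_besselI0 : Continuous besselI0 :=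
  continuous_iff_continuousAt.2 fun u => (hasDerivAt_besselI0 u).continuousAt

@[fun_prop]
lemma continuous_besselI1 : Continuous besselI1 :=
  continuous_iff_continuousAt.2 fun u => (hasDerivAt_besselI1 u).continuousAt

@[fun_prop]
lemma continuous_gBessel : Continuous gBessel := by
  unfold gBessel
  fun_prop

lemma besselI0_zero : besselI0 0 = 1 := by
  simp [besselI0, pi_ne_zero]

-- Integration by parts against `d/dφ (e^{u cos φ} sin φ)`, whose boundary terms vanish.
lemma mul_integral_exp_mul_cos_mul_sin_sq (u : ℝ) :
    u * ∫ φ in (0:ℝ)..π, exp (u * cos φ) * sin φ ^ 2 = ∫ φ in (0:ℝ)..π, exp (u * cos φ) * cos φ := by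
  have hderiv : ∀ φ ∈ uIcc 0 π, HasDerivAt (fun φ => exp (u * cos φ) * sin φ)
      (exp (u * cos φ) * cos φ - u * (exp (u * cos φ) * sin φ ^ 2)) φ := fun φ _ =>
    (((hasDerivAt_cos φ).const_mul u).exp.fun_mul (hasDerivAt_sin φ)).congr_deriv (by ring)
  have hftc := integral_eq_sub_of_hasDerivAt hderiv
    ((by fun_prop : Continuous _).intervalIntegrable _ _)
  rw [intervalIntegral.integral_sub (by apply Continuous.intervalIntegrable; fun_prop)
    (by apply Continuous.intervalIntegrable; fun_prop), intervalIntegral.integral_const_mul] at hftc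
  simp only [sin_pi, sin_zero, mul_zero, sub_zero, sub_eq_zero] at hftc
  exact hftc.symm

-- The modified Bessel equation, in the form `(u I₁)' = u I₀`.
lemma hasDerivAt_mul_besselI1 (u : ℝ) :
    HasDerivAt (fun v => v * besselI1 v) (u * besselI0 u) u := by
  refine ((hasDerivAt_id' u).fun_mul (hasDerivAt_besselI1 u)).congr_deriv ?_
  have hsplit : ∫ φ in (0:ℝ)..π, exp (u * cos φ) =
      (∫ φ in (0:ℝ)..π, exp (u * cos φ) * sin φ ^ 2)
        + ∫ φ in (0:ℝ)..π, exp (u * cos φ) * cos φ * cos φ := by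
    rw [← intervalIntegral.integral_add (by apply Continuous.intervalIntegrable; fun_prop)
      (by apply Continuous.intervalIntegrable; fun_prop)]
    refine integral_congr fun φ _ => ?_
    linear_combination (-exp (u * cos φ)) * sin_sq_add_cos_sq φ
  simp only [besselI0, besselI1]
  rw [hsplit, ← mul_integral_exp_mul_cos_mul_sin_sq]
  ring

lemma hasDerivAt_gBessel (u : ℝ) : HasDerivAt gBessel (exp (-u) * besselI0 u) u := by
  have hprod : HasDerivAt (fun v => v * besselI0 v) (besselI0 u + u * besselI1 u) u :=
    ((hasDerivAt_id' u).fun_mul (hasDerivAt_besselI0 u)).congr_deriv (by ring)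
  have hg : gBessel = fun v => exp (-v) * (v * besselI0 v + v * besselI1 v) :=
    funext fun v => by simp only [gBessel]; ring
  rw [hg]
  exact ((hasDerivAt_neg u).exp.fun_mul (hprod.fun_add (hasDerivAt_mul_besselI1 u))).congr_deriv
    (by ring)

lemma continuous_log_mul_gBessel : Continuous fun u => log u * gBessel u := by
  have : (fun u => log u * gBessel u) =
      fun u => u * log u * (exp (-u) * (besselI0 u + besselI1 u)) := by
    ext u; simp only [gBessel]; ring
  rw [this]
  exact continuous_mul_log.mul (by fun_prop)

lemma hasDerivAt_log_mul_gBessel_sub {u : ℝ} (hu : u ≠ 0) :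
    HasDerivAt (fun v => log v * gBessel v - 2 * gBessel v - exp (-v) * besselI0 v)
      (log u * (exp (-u) * besselI0 u)) u := by
  refine ((((hasDerivAt_log hu).fun_mul (hasDerivAt_gBessel u)).fun_sub
    ((hasDerivAt_gBessel u).const_mul 2)).fun_sub
    ((hasDerivAt_neg u).exp.fun_mul (hasDerivAt_besselI0 u))).congr_deriv ?_
  simp only [gBessel]
  field_simp
  ring

theorem integral_log_exp_besselI0_general (X : ℝ) :
    ∫ u in (0:ℝ)..X, Real.log u * (Real.exp (-u) * besselI0 u)
      = Real.log X * gBessel X - 2 * gBessel X - Real.exp (-X) * besselI0 X + 1 := by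
  have hderiv : ∀ u ∈ Ioo (min 0 X) (max 0 X), HasDerivWithinAt
      (fun v => log v * gBessel v - 2 * gBessel v - exp (-v) * besselI0 v)
      (log u * (exp (-u) * besselI0 u)) (Ioi u) u := by
    refine fun u hu => (hasDerivAt_log_mul_gBessel_sub ?_).hasDerivWithinAt
    rintro rfl
    simp only [mem_Ioo, min_lt_iff, lt_max_iff] at hu
    rcases hu with ⟨h | h, h' | h'⟩ <;> linarith
  rw [integral_eq_sub_of_hasDeriv_right
    ((continuous_log_mul_gBessel.sub (by fun_prop)).sub (by fun_prop)).continuousOn hderiv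
    (intervalIntegrable_log'.mul_continuousOn (by fun_prop))]
  simp [gBessel, besselI0_zero]

/-- For every `X > 0`,
`∫₀^X (log u) e^{−u} I₀(u) du = (log X) g(X) − 2 g(X) − e^{−X} I₀(X) + 1`. -/
theorem integral_log_exp_besselI0 (X : ℝ) (hX : 0 < X) :
    ∫ u in (0:ℝ)..X, Real.log u * (Real.exp (-u) * besselI0 u)
      = Real.log X * gBessel X - 2 * gBessel X - Real.exp (-X) * besselI0 X + 1 :=
  integral_log_exp_besselI0_general X
end
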